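/- arXiv:2411.12316 — 2 statements merged into one kernel-verified Lean document; each statement's English description precedes it below -/
import Mathlib

section
/- Let l be a prime with l ≡ 3 mod 4 and p an odd prime that is a quadratic nonresidue mod l. Then the equation y² = -1 + 4p·l²·x⁴ has no solutions x, y ∈ ℚ_l. -/
/-- For `l ≡ 3 mod 4` prime and `p` an odd prime that is a quadratic nonresidue mod `l`,
the equation `y² = -1 + 4pl²x⁴` has no solutions in `ℚ_l`. -/
theorem stmt9 (l p : ℕ) [Fact l.Prime] (hl4 : l % 4 = 3)
    (hp : p.Prime) (hpodd : p ≠ 2) (h : ¬ IsSquare ((p : ZMod l))) :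
    ¬ ∃ x y : ℚ_[l], y ^ 2 = -1 + 4 * (p : ℚ_[l]) * (l : ℚ_[l]) ^ 2 * x ^ 4 := by
  have hlp : l.Prime := Fact.out
  have hl2' : 2 ≤ l := hlp.two_le
  have hl2 : l ≠ 2 := by omega
  have hlR1 : (1 : ℝ) < (l : ℝ) := by exact_mod_cast show (1:ℕ) < l by omega
  have hlR0 : (0 : ℝ) < (l : ℝ) := by linarith
  -- l does not divide p
  have hlnp : ¬ l ∣ p := by
    intro hd
    apply h
    have : (p : ZMod l) = 0 := (ZMod.natCast_eq_zero_iff p l).mpr hd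
    exact ⟨0, by simp [this]⟩
  -- norm of 4*p in ℚ_[l] is 1
  have h4p : ‖(4 * (p : ℚ_[l]))‖ = 1 := by
    have hle : ‖((4 * p : ℕ) : ℚ_[l])‖ ≤ 1 := by
      rw [show ((4 * p : ℕ) : ℚ_[l]) = ((4 * p : ℤ) : ℚ_[l]) by push_cast; ring]
      exact Padic.norm_int_le_one (4 * p : ℤ)
    have hnlt : ¬ ‖((4 * p : ℕ) : ℚ_[l])‖ < 1 := by
      rw [show ((4 * p : ℕ) : ℚ_[l]) = ((4 * p : ℤ) : ℚ_[l]) by push_cast; ring,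
        Padic.norm_intCast_lt_one_iff]
      intro hd
      have hd' : l ∣ 4 * p := by exact_mod_cast hd
      rcases (Nat.Prime.dvd_mul hlp).mp hd' with h4 | hpp
      · have : l ∣ 2 := hlp.dvd_of_dvd_pow (show l ∣ 2 ^ 2 by norm_num [h4])
        exact hl2 ((Nat.prime_dvd_prime_iff_eq hlp Nat.prime_two).mp this)
      · exact hlnp hpp
    have := le_antisymm hle (not_lt.mp hnlt)
    rw [show (4 * (p : ℚ_[l])) = ((4 * p : ℕ) : ℚ_[l]) by push_cast; ring]
    exact this
  have hnl : ‖(l : ℚ_[l])‖ = (l : ℝ)⁻¹ := Padic.norm_p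
  rintro ⟨x, y, hxy⟩
  by_cases hx : ‖x‖ ≤ 1
  · -- x is an l-adic integer; reduce mod l to get y² ≡ -1
    have hc : ‖4 * (p : ℚ_[l]) * (l : ℚ_[l]) ^ 2 * x ^ 4‖ < 1 := by
      rw [norm_mul, norm_mul, norm_pow, norm_pow, h4p, hnl]
      have h1 : ((l : ℝ)⁻¹) ^ 2 < 1 := by
        apply pow_lt_one₀ (by positivity) (by rw [inv_lt_one_iff₀]; right; exact hlR1) (by norm_num)
      have h2 : ‖x‖ ^ 4 ≤ 1 := pow_le_one₀ (norm_nonneg x) hx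
      nlinarith [norm_nonneg x, pow_nonneg (norm_nonneg x) 4]
    have hy2 : ‖y ^ 2‖ = 1 := by
      rw [hxy, Padic.add_eq_max_of_ne (by rw [norm_neg, norm_one]; exact ne_of_gt hc)]
      rw [norm_neg, norm_one]
      exact max_eq_left hc.le
    have hy : ‖y‖ = 1 := by
      rw [norm_pow] at hy2
      nlinarith [norm_nonneg y]
    set X : ℤ_[l] := ⟨x, hx⟩ with hX
    set Y : ℤ_[l] := ⟨y, hy.le⟩ with hY
    have hmain : Y ^ 2 = -1 + 4 * (p : ℤ_[l]) * (l : ℤ_[l]) ^ 2 * X ^ 4 := by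
      apply Subtype.ext
      push_cast
      exact hxy
    have hred := congrArg PadicInt.toZMod hmain
    simp only [map_pow, map_add, map_mul, map_neg, map_one, map_natCast, map_ofNat,
      ZMod.natCast_self, ne_eq, OfNat.ofNat_ne_zero, not_false_eq_true, zero_pow,
      mul_zero, zero_mul, add_zero] at hred
    have : IsSquare (-1 : ZMod l) := ⟨PadicInt.toZMod Y, by rw [← hred]; ring⟩
    exact (ZMod.exists_sq_eq_neg_one_iff.mp this) hl4
  · -- |x| > 1 : rescale
    push_neg at hx
    have hx0 : x ≠ 0 := by
      intro h0; rw [h0, norm_zero] at hx; linarith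
    have hval : x.valuation < 0 := by
      by_contra hv
      push_neg at hv
      have := Padic.norm_eq_zpow_neg_valuation hx0
      rw [this] at hx
      have : (l : ℝ) ^ (-x.valuation) ≤ 1 := by
        apply zpow_le_one_of_nonpos₀ hlR1.le (by omega)
      linarith
    set a : ℕ := (-x.valuation).toNat with ha
    have ha1 : 1 ≤ a := by omega
    have hav : (a : ℤ) = -x.valuation := by omega
    set x' : ℚ_[l] := x * (l : ℚ_[l]) ^ a with hx'
    set y' : ℚ_[l] := y * (l : ℚ_[l]) ^ (2 * a - 1) with hy'
    have hnx' : ‖x'‖ = 1 := by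
      rw [hx', norm_mul, norm_pow, hnl, Padic.norm_eq_zpow_neg_valuation hx0, ← hav,
        zpow_natCast]
      rw [← mul_pow, mul_inv_cancel₀ (ne_of_gt hlR0), one_pow]
    -- the rescaled equation
    have heq : y' ^ 2 = -(l : ℚ_[l]) ^ (4 * a - 2) + 4 * (p : ℚ_[l]) * x' ^ 4 := by
      have e1 : y' ^ 2 = (-1 + 4 * (p : ℚ_[l]) * (l : ℚ_[l]) ^ 2 * x ^ 4) *
          (l : ℚ_[l]) ^ (4 * a - 2) := by
        rw [hy', mul_pow, ← pow_mul, show (2 * a - 1) * 2 = 4 * a - 2 by omega, hxy]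
      have hpow : (l : ℚ_[l]) ^ (4 * a) = (l : ℚ_[l]) ^ 2 * (l : ℚ_[l]) ^ (4 * a - 2) := by
        rw [← pow_add]; congr 1; omega
      rw [e1, hx', mul_pow, ← pow_mul, show a * 4 = 4 * a by ring, hpow]
      ring
    have hlpow : ‖(l : ℚ_[l]) ^ (4 * a - 2)‖ < 1 := by
      rw [norm_pow, hnl]
      apply pow_lt_one₀ (by positivity) (by rw [inv_lt_one_iff₀]; right; exact hlR1) (by omega)
    have hn4px : ‖4 * (p : ℚ_[l]) * x' ^ 4‖ = 1 := by
      rw [norm_mul, norm_pow, hnx', h4p]; ring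
    have hy'2 : ‖y' ^ 2‖ = 1 := by
      have hne : ‖-(l : ℚ_[l]) ^ (4 * a - 2)‖ ≠ ‖4 * (p : ℚ_[l]) * x' ^ 4‖ := by
        rw [norm_neg, hn4px]; exact ne_of_lt hlpow
      rw [heq, Padic.add_eq_max_of_ne hne, norm_neg, hn4px]
      exact max_eq_right hlpow.le
    have hny' : ‖y'‖ = 1 := by
      rw [norm_pow] at hy'2
      nlinarith [norm_nonneg y']
    set X : ℤ_[l] := ⟨x', hnx'.le⟩ with hX
    set Y : ℤ_[l] := ⟨y', hny'.le⟩ with hY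
    have hmain : Y ^ 2 = -(l : ℤ_[l]) ^ (4 * a - 2) + 4 * (p : ℤ_[l]) * X ^ 4 := by
      apply Subtype.ext
      push_cast
      exact heq
    have hXunit : IsUnit X := PadicInt.isUnit_iff.mpr hnx'
    have hred := congrArg PadicInt.toZMod hmain
    simp only [map_pow, map_add, map_mul, map_neg, map_natCast, map_ofNat,
      ZMod.natCast_self, zero_pow (show 4 * a - 2 ≠ 0 by omega), neg_zero, zero_add] at hred
    set u : ZMod l := PadicInt.toZMod X with hu
    set w : ZMod l := PadicInt.toZMod Y with hw
    have hu0 : u ≠ 0 := (hXunit.map PadicInt.toZMod).ne_zero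
    have h20 : (2 : ZMod l) ≠ 0 := by
      have : ((2 : ℕ) : ZMod l) ≠ 0 := by
        rw [Ne, ZMod.natCast_eq_zero_iff]
        exact fun hd => hl2 ((Nat.prime_dvd_prime_iff_eq hlp Nat.prime_two).mp hd)
      simpa using this
    apply h
    refine ⟨w * (2 * u ^ 2)⁻¹, ?_⟩
    have h2u : (2 * u ^ 2) ≠ 0 := by
      exact mul_ne_zero h20 (pow_ne_zero 2 hu0)
    field_simp
    linear_combination -hred
end

section
/- Let l, p be distinct odd primes with p ≡ 1 mod 4 and (p/l) = -1. Then the equation y² = l + p·l·x⁴ has no solutions x, y ∈ ℚ_p. -/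
/-! If `‖x‖ ≤ 1`, then `1 + p x⁴` is a square by Hensel's lemma, so `l` is a square in `ℚ_p`, hence
modulo `p`, hence (quadratic reciprocity, `p ≡ 1 mod 4`) `p` is a square modulo `l`. If `‖x‖ > 1`,
the term `p l x⁴` dominates `l`, and its valuation `1 + 4 v(x)` is odd, so the right-hand side is
not a square. -/

namespace PadicInt

variable {p : ℕ} [Fact p.Prime]

open Polynomial in
theorem isSquare_of_norm_sub_one_lt (hp : p ≠ 2) {u : ℤ_[p]} (hu : ‖u - 1‖ < 1) :
    IsSquare u := by
  have h2 : ‖(2 : ℤ_[p])‖ = 1 := by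
    exact_mod_cast norm_natCast_eq_one_iff.mpr ((Nat.coprime_primes Fact.out Nat.prime_two).mpr hp)
  have hF : ‖(X ^ 2 - C u : ℤ_[p][X]).aeval (1 : ℤ_[p])‖ <
      ‖(X ^ 2 - C u : ℤ_[p][X]).derivative.aeval (1 : ℤ_[p])‖ ^ 2 := by
    simpa [derivative_sq, h2, norm_sub_rev] using hu
  obtain ⟨z, hz, -⟩ := hensels_lemma hF
  rw [map_sub, map_pow, aeval_X, aeval_C, Algebra.algebraMap_self, RingHom.id_apply,
    sub_eq_zero] at hz
  exact ⟨z, by rw [← hz, sq]⟩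

end PadicInt

namespace Padic

variable {p : ℕ} [Fact p.Prime]

theorem isSquare_of_norm_sub_one_lt (hp : p ≠ 2) {u : ℚ_[p]} (hu : ‖u - 1‖ < 1) :
    IsSquare u := by
  have hu1 : ‖u‖ ≤ 1 := by
    simpa using (nonarchimedean (u - 1) 1).trans (max_le hu.le (by simp))
  exact (PadicInt.isSquare_of_norm_sub_one_lt hp (u := ⟨u, hu1⟩) hu).map PadicInt.Coe.ringHom

theorem isSquare_of_isSquare_mul_one_add (hp : p ≠ 2) {a x : ℚ_[p]} (hx : ‖x‖ < 1)
    (h : IsSquare (a * (1 + x))) : IsSquare a := by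
  have hx1 : 1 + x ≠ 0 := fun h0 => by
    rw [eq_neg_of_add_eq_zero_right h0, norm_neg, norm_one] at hx
    exact hx.false
  simpa [hx1] using h.div (isSquare_of_norm_sub_one_lt hp (u := 1 + x) (by simpa using hx))

theorem isSquare_natCast_zmod_of_isSquare {n : ℕ} (h : IsSquare (n : ℚ_[p])) :
    IsSquare (n : ZMod p) := by
  obtain ⟨w, hw⟩ := h
  have hw1 : ‖w‖ ≤ 1 := by
    have : ‖w‖ * ‖w‖ ≤ 1 := by rw [← norm_mul, ← hw]; exact_mod_cast norm_int_le_one n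
    nlinarith [norm_nonneg w]
  have : (n : ℤ_[p]) = ⟨w, hw1⟩ * ⟨w, hw1⟩ := PadicInt.ext (by push_cast; exact hw)
  simpa using IsSquare.map PadicInt.toZMod ⟨_, this⟩

theorem even_valuation_of_isSquare {x : ℚ_[p]} (h : IsSquare x) : Even x.valuation := by
  obtain ⟨r, rfl⟩ := h
  rcases eq_or_ne r 0 with rfl | hr
  · simp
  · exact ⟨r.valuation, valuation_mul hr hr⟩

theorem valuation_add_of_norm_lt {x y : ℚ_[p]} (h : ‖x‖ < ‖y‖) :
    (x + y).valuation = y.valuation := by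
  have hy : y ≠ 0 := norm_pos_iff.mp ((norm_nonneg x).trans_lt h)
  have hsum : ‖x + y‖ = ‖y‖ := by rw [add_eq_max_of_ne h.ne, max_eq_right h.le]
  have hxy : x + y ≠ 0 := norm_ne_zero_iff.mp (hsum ▸ norm_ne_zero_iff.mpr hy)
  have hp1 : (1 : ℝ) < p := by exact_mod_cast (Fact.out : p.Prime).one_lt
  rwa [norm_eq_zpow_neg_valuation hxy, norm_eq_zpow_neg_valuation hy,
    zpow_right_inj₀ (by positivity) hp1.ne', neg_inj] at hsum

theorem not_isSquare_add_of_norm_lt_of_odd_valuation {a b : ℚ_[p]} (h : ‖a‖ < ‖b‖) (hb : Odd b.valuation) :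
    ¬IsSquare (a + b) := fun hsq => by
  have := even_valuation_of_isSquare hsq
  rw [valuation_add_of_norm_lt h] at this
  exact Int.not_even_iff_odd.mpr hb this

end Padic

open Padic in
/-- For `l`, `p` distinct odd primes with `p ≡ 1 mod 4` and `(p/l) = -1`, the equation
`y² = l + plx⁴` has no solutions in `ℚ_p`. -/
theorem stmt10 (l p : ℕ) [Fact p.Prime] (hl : l.Prime) (hlodd : l ≠ 2) (hne : l ≠ p)
    (hp4 : p % 4 = 1) (h : ¬ IsSquare ((p : ZMod l))) :
    ¬ ∃ x y : ℚ_[p], y ^ 2 = (l : ℚ_[p]) + (p : ℚ_[p]) * (l : ℚ_[p]) * x ^ 4 := by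
  have : Fact l.Prime := ⟨hl⟩
  rintro ⟨x, y, hxy⟩
  have hsq : IsSquare ((l : ℚ_[p]) + p * l * x ^ 4) := ⟨y, by rw [← hxy, sq]⟩
  rcases le_or_gt ‖x‖ 1 with hx | hx
  · have hsmall : ‖(p : ℚ_[p]) * x ^ 4‖ < 1 := by
      rw [norm_mul, norm_pow]
      exact mul_lt_one_of_nonneg_of_lt_one_left (norm_nonneg _) norm_p_lt_one
        (pow_le_one₀ (norm_nonneg x) hx)
    have hl_sq : IsSquare (l : ℚ_[p]) :=
      isSquare_of_isSquare_mul_one_add (by omega) hsmall (by convert hsq using 1; ring)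
    exact h ((ZMod.exists_sq_eq_prime_iff_of_mod_four_eq_one hp4 hlodd).mp
      (isSquare_natCast_zmod_of_isSquare hl_sq))
  · have hvx : x.valuation < 0 := by simpa using (norm_le_one_iff_val_nonneg x).not.mp hx.not_ge
    have hx0 : x ≠ 0 := by rintro rfl; simp at hvx
    have hpl : ¬p ∣ l := fun hd => hne ((Nat.prime_dvd_prime_iff_eq Fact.out hl).mp hd).symm
    set b : ℚ_[p] := p * l * x ^ 4
    have hvb : b.valuation = 1 + 4 * x.valuation := by
      simp [b, hx0, hl.ne_zero, (Fact.out : p.Prime).ne_zero, padicValNat.eq_zero_of_not_dvd hpl]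
    have hlb : ‖(l : ℚ_[p])‖ < ‖b‖ := by
      refine lt_of_le_of_lt (by exact_mod_cast norm_int_le_one l) ?_
      simpa using (norm_le_one_iff_val_nonneg b).not.mpr (by omega)
    exact not_isSquare_add_of_norm_lt_of_odd_valuation hlb (hvb ▸ ⟨2 * x.valuation, by ring⟩) hsq
end
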